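/- arXiv:1409.8550 — 5 statements merged into one kernel-verified Lean document; each statement's English description precedes it below -/
import Mathlib

section
/- Let δ be an invertible diagonal n×n real matrix, 𝒜 = {X : δX + Xᵀδ = 0}, 𝒮 = {S : δS = Sᵀδ}. Fix S ∈ 𝒮. The map X ↦ δX is a Lie algebra isomorphism from (𝒜, [·,·]_S) onto (𝔰𝔬_{Sδ⁻¹}(n), [·,·]_{Sδ⁻¹}), where 𝔰𝔬_T(n) denotes the skew-symmetric n×n matrices with bracket [U,V]_T = UTV - VTU. In particular: (i) if X ∈ 𝒜 then δX is skew-symmetric; (ii) δ[X,Y]_S = [δX, δY]_{Sδ⁻¹} for all X,Y ∈ 𝒜; (iii) the map is a linear bijection from 𝒜 onto the skew-symmetric matrices. -/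
open Matrix

theorem iso_with_so_S_delta_inv {n : ℕ}
    (δ S : Matrix (Fin n) (Fin n) ℝ)
    (hδd : δ.IsDiag) (hδ : IsUnit δ.det)
    (hS : δ * S = Sᵀ * δ) :
    (∀ X : Matrix (Fin n) (Fin n) ℝ, δ * X + Xᵀ * δ = 0 → (δ * X)ᵀ = -(δ * X)) ∧
    (∀ X Y : Matrix (Fin n) (Fin n) ℝ, δ * X + Xᵀ * δ = 0 → δ * Y + Yᵀ * δ = 0 →
      δ * (X * S * Y - Y * S * X) =
        (δ * X) * (S * δ⁻¹) * (δ * Y) - (δ * Y) * (S * δ⁻¹) * (δ * X)) ∧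
    (∀ U : Matrix (Fin n) (Fin n) ℝ, Uᵀ = -U →
      ∃! X : Matrix (Fin n) (Fin n) ℝ, δ * X + Xᵀ * δ = 0 ∧ δ * X = U) := by
  have hsym : δᵀ = δ := hδd.isSymm
  have hinv : δ⁻¹ * δ = 1 := nonsing_inv_mul δ hδ
  have hinv' : δ * δ⁻¹ = 1 := mul_nonsing_inv δ hδ
  refine ⟨?_, ?_, ?_⟩
  · intro X hX
    have : Xᵀ * δ = -(δ * X) := by linear_combination (norm := noncomm_ring) hX
    rw [transpose_mul, hsym, this]
  · intro X Y _ _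
    calc δ * (X * S * Y - Y * S * X)
        = δ * X * S * (δ⁻¹ * δ) * Y - δ * Y * S * (δ⁻¹ * δ) * X := by
          rw [hinv]; noncomm_ring
      _ = (δ * X) * (S * δ⁻¹) * (δ * Y) - (δ * Y) * (S * δ⁻¹) * (δ * X) := by
          noncomm_ring
  · intro U hU
    refine ⟨δ⁻¹ * U, ⟨?_, ?_⟩, ?_⟩
    · have h1 : δ * (δ⁻¹ * U) = U := by rw [← mul_assoc, hinv', one_mul]
      have h2 : (δ⁻¹ * U)ᵀ * δ = -U := by
        rw [transpose_mul, transpose_nonsing_inv, hsym, mul_assoc, hinv, mul_one, hU]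
      rw [h1, h2, add_neg_cancel]
    · rw [← mul_assoc, hinv', one_mul]
    · rintro X ⟨-, h⟩
      rw [← h, ← mul_assoc, hinv, one_mul]
end

section
/- Let δ be an invertible diagonal n×n real matrix, 𝒜 = {X : δX + Xᵀδ = 0}, 𝒮 = {S : δS = Sᵀδ}. Fix S ∈ 𝒮 and an invertible n×n matrix C. Then: (i) if X ∈ 𝒜 then CδXCᵀδ ∈ 𝒜; (ii) CᵀδSCδ ∈ 𝒮; (iii) Cδ[X,Y]_{CᵀδSCδ}Cᵀδ = [CδXCᵀδ, CδYCᵀδ]_S for all X,Y ∈ 𝒜, where [U,V]_T := UTV - VTU. Hence X ↦ CδXCᵀδ is a Lie algebra isomorphism (𝒜, [·,·]_{CᵀδSCδ}) ≅ (𝒜, [·,·]_S). -/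
open Matrix

theorem iso_conjugation {n : ℕ}
    (δ S C : Matrix (Fin n) (Fin n) ℝ)
    (hδd : δ.IsDiag) (hδ : IsUnit δ.det)
    (hS : δ * S = Sᵀ * δ) (hC : IsUnit C.det) :
    (∀ X : Matrix (Fin n) (Fin n) ℝ, δ * X + Xᵀ * δ = 0 →
      δ * (C * δ * X * Cᵀ * δ) + (C * δ * X * Cᵀ * δ)ᵀ * δ = 0) ∧
    (δ * (Cᵀ * δ * S * C * δ) = (Cᵀ * δ * S * C * δ)ᵀ * δ) ∧
    (∀ X Y : Matrix (Fin n) (Fin n) ℝ, δ * X + Xᵀ * δ = 0 → δ * Y + Yᵀ * δ = 0 →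
      C * δ * (X * (Cᵀ * δ * S * C * δ) * Y - Y * (Cᵀ * δ * S * C * δ) * X) * Cᵀ * δ =
        (C * δ * X * Cᵀ * δ) * S * (C * δ * Y * Cᵀ * δ) -
          (C * δ * Y * Cᵀ * δ) * S * (C * δ * X * Cᵀ * δ)) := by
  have hδt : δᵀ = δ := by
    ext i j
    by_cases h : i = j
    · subst h; simp [Matrix.transpose_apply]
    · rw [Matrix.transpose_apply, hδd h, hδd (Ne.symm h)]
  refine ⟨?_, ?_, ?_⟩
  · intro X hX
    have : δ * (C * δ * X * Cᵀ * δ) + (C * δ * X * Cᵀ * δ)ᵀ * δ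
        = δ * C * (δ * X + Xᵀ * δ) * Cᵀ * δ := by
      simp only [Matrix.transpose_mul, Matrix.transpose_transpose, hδt]
      noncomm_ring
    rw [this, hX]
    simp
  · have : δ * (Cᵀ * δ * S * C * δ) = δ * Cᵀ * (δ * S) * C * δ := by noncomm_ring
    rw [this, hS]
    simp only [Matrix.transpose_mul, Matrix.transpose_transpose, hδt]
    noncomm_ring
  · intro X Y _ _
    noncomm_ring
end

section
/- Let δ be an invertible diagonal n×n real matrix and S ∈ 𝒮 = {S : δS = Sᵀδ} invertible. For any n×n matrix ρ and l ≥ 1, the gradient of C_l(ρ) = (1/(2l))·Tr(((ρ - δ⁻¹ρᵀδ)S⁻¹)^{2l}) with respect to ρ equals 2S⁻¹((ρ - δ⁻¹ρᵀδ)S⁻¹)^{2l-1}, in the sense that the Fréchet derivative of C_l at ρ applied to Δ is Tr(2S⁻¹((ρ - δ⁻¹ρᵀδ)S⁻¹)^{2l-1}·Δ) after projecting onto 𝒜; moreover 2S⁻¹((ρ - δ⁻¹ρᵀδ)S⁻¹)^{2l-1} belongs to 𝒜 = {X : δX + Xᵀδ = 0}. -/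
open Matrix

attribute [local instance] Matrix.normedAddCommGroup Matrix.normedSpace

variable {n : ℕ}
local notation "M" => Matrix (Fin n) (Fin n) ℝ

noncomputable def mulCLM : M →L[ℝ] M →L[ℝ] M :=
  LinearMap.toContinuousLinearMap
    { toFun := fun A => LinearMap.toContinuousLinearMap (LinearMap.mulLeft ℝ A)
      map_add' := by intros; ext x; simp [add_mul]
      map_smul' := by intros; ext x; simp [smul_mul_assoc] }

@[simp] lemma mulCLM_apply (A B : M) : mulCLM A B = A * B := by
  simp [mulCLM]

lemma matrix_hasFDerivAt_mul {f g : M → M} {f' g' : M →L[ℝ] M} {x : M}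
    (hf : HasFDerivAt f f' x) (hg : HasFDerivAt g g' x) :
    HasFDerivAt (fun y => f y * g y)
      (HAdd.hAdd (α := M →L[ℝ] M) (β := M →L[ℝ] M) ((mulCLM (f x)).comp g') ((mulCLM.flip (g x)).comp f')) x := by
  have h := (mulCLM.isBoundedBilinearMap.hasFDerivAt (f x, g x)).comp x (hf.prodMk hg)
  convert h using 1
  all_goals rfl

lemma matrix_hasFDerivAt_pow (k : ℕ) (A : M) :
    HasFDerivAt (fun X : M => X ^ k)
      (∑ i ∈ Finset.range k, (mulCLM (A ^ i)).comp (mulCLM.flip (A ^ (k - 1 - i)))) A := by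
  induction k with
  | zero =>
    simp only [pow_zero, Finset.range_zero, Finset.sum_empty]
    exact hasFDerivAt_const (1 : M) A
  | succ k ih =>
    have h := matrix_hasFDerivAt_mul (f := fun X => X ^ k) (g := fun X => X) ih (hasFDerivAt_id A)
    have hfun : (fun X : M => X ^ k * X) = fun X : M => X ^ (k + 1) := by
      funext X; rw [← pow_succ]
    rw [hfun] at h
    convert h using 1
    · rfl
    · rfl
    apply heq_of_eq
    refine ContinuousLinearMap.ext fun Δ => ?_
    rw [ContinuousLinearMap.sum_apply]
    change ∑ i ∈ Finset.range (k + 1), A ^ i * (Δ * A ^ (k + 1 - 1 - i)) = A ^ k * Δ +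
      ((∑ i ∈ Finset.range k, (mulCLM (A ^ i)).comp (mulCLM.flip (A ^ (k - 1 - i)))) Δ) * A
    rw [ContinuousLinearMap.sum_apply]
    change _ = _ + (∑ i ∈ Finset.range k, A ^ i * (Δ * A ^ (k - 1 - i))) * A
    rw [Finset.sum_range_succ]
    simp only [Nat.add_sub_cancel, Nat.sub_self, pow_zero, mul_one]
    rw [add_comm, Finset.sum_mul]
    congr 1
    refine Finset.sum_congr rfl fun i hi => ?_
    have hi' : i < k := Finset.mem_range.mp hi
    have h1 : k - 1 - i + 1 = k - i := by omega
    rw [mul_assoc, mul_assoc, ← pow_succ, h1]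


lemma key_skew (δ T B : M)
    (hT : δ * T = Tᵀ * δ) (hB : δ * B = -(Bᵀ * δ)) (k : ℕ) :
    δ * (T * (B * T) ^ k) = ((-1 : ℝ) ^ k) • ((T * (B * T) ^ k)ᵀ * δ) := by
  induction k with
  | zero => simpa using hT
  | succ k ih =>
    have hT' : ∀ X : M, δ * (T * X) = Tᵀ * (δ * X) := by
      intro X; rw [← mul_assoc, hT, mul_assoc]
    have hB' : ∀ X : M, δ * (B * X) = -(Bᵀ * (δ * X)) := by
      intro X; rw [← mul_assoc, hB, neg_mul, mul_assoc]
    calc δ * (T * (B * T) ^ (k + 1))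
        = δ * (T * (B * (T * (B * T) ^ k))) := by
          rw [pow_succ' (B * T) k, mul_assoc B T ((B*T)^k)]
      _ = Tᵀ * (δ * (B * (T * (B * T) ^ k))) := hT' _
      _ = Tᵀ * (-(Bᵀ * (δ * (T * (B * T) ^ k)))) := by rw [hB']
      _ = Tᵀ * (-(Bᵀ * (((-1 : ℝ) ^ k) • ((T * (B * T) ^ k)ᵀ * δ)))) := by rw [ih]
      _ = ((-1 : ℝ) ^ (k + 1)) • (Tᵀ * (Bᵀ * ((T * (B * T) ^ k)ᵀ * δ))) := by
          rw [pow_succ]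
          simp [mul_smul_comm, smul_smul]
      _ = ((-1 : ℝ) ^ (k + 1)) • ((T * (B * T) ^ (k + 1))ᵀ * δ) := by
          congr 1
          rw [pow_succ (B * T) k]
          simp only [transpose_mul, Matrix.mul_assoc]

lemma key_trace (δ T X Δ : M) (hδ' : δ * δ⁻¹ = 1)
    (hN : δ * (T * X) = -((T * X)ᵀ * δ)) :
    trace (X * ((Δ - δ⁻¹ * Δᵀ * δ) * T)) = trace (((2:ℝ) • (T * X)) * Δ) := by
  have c1 : trace (X * (Δ * T)) = trace (T * X * Δ) := by
    rw [← mul_assoc, trace_mul_comm, ← mul_assoc]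
  have c2 : trace (X * (δ⁻¹ * Δᵀ * δ * T)) = -trace (T * X * Δ) := by
    calc trace (X * (δ⁻¹ * Δᵀ * δ * T))
        = trace (δ⁻¹ * Δᵀ * (δ * (T * X))) := by
          rw [trace_mul_comm]; congr 1; simp only [Matrix.mul_assoc]
      _ = -trace (δ⁻¹ * (Δᵀ * ((T * X)ᵀ * δ))) := by
          rw [hN]; simp only [Matrix.mul_neg, trace_neg, Matrix.mul_assoc]
      _ = -trace (Δᵀ * ((T * X)ᵀ * (δ * δ⁻¹))) := by
          rw [trace_mul_comm]; simp only [Matrix.mul_assoc]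
      _ = -trace (Δᵀ * (T * X)ᵀ) := by rw [hδ', mul_one]
      _ = -trace ((T * X * Δ)ᵀ) := by
          simp only [transpose_mul, Matrix.mul_assoc]
      _ = -trace (T * X * Δ) := by rw [trace_transpose]
  calc trace (X * ((Δ - δ⁻¹ * Δᵀ * δ) * T))
      = trace (X * (Δ * T)) - trace (X * (δ⁻¹ * Δᵀ * δ * T)) := by
        rw [Matrix.sub_mul, Matrix.mul_sub, trace_sub]
    _ = trace (T * X * Δ) + trace (T * X * Δ) := by rw [c1, c2]; ring
    _ = trace (((2:ℝ) • (T * X)) * Δ) := by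
        rw [Matrix.smul_mul, trace_smul]; simp; ring

noncomputable def phiL (δ T : M) : M →ₗ[ℝ] M where
  toFun σ := (σ - δ⁻¹ * σᵀ * δ) * T
  map_add' σ τ := by
    simp only [transpose_add, Matrix.mul_add, Matrix.add_mul, Matrix.sub_mul]
    abel
  map_smul' c σ := by
    simp only [transpose_smul, Matrix.mul_smul, mul_smul_comm, smul_sub, RingHom.id_apply,
      ← smul_sub, Matrix.smul_mul]

@[simp] lemma phiL_apply (δ T σ : M) : phiL δ T σ = (σ - δ⁻¹ * σᵀ * δ) * T := rfl

/-- The gradient of `C_l(ρ) = (1/(2l)) Tr(((ρ - δ⁻¹ρᵀδ)S⁻¹)^{2l})` is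
`2S⁻¹((ρ - δ⁻¹ρᵀδ)S⁻¹)^{2l-1}`, which moreover is deformed skew-symmetric. -/
theorem casimir_gradient {n : ℕ}
    (δ S : Matrix (Fin n) (Fin n) ℝ)
    (hδd : δ.IsDiag) (hδ : IsUnit δ.det)
    (hS : δ * S = Sᵀ * δ) (hSu : IsUnit S.det)
    (l : ℕ) (hl : 1 ≤ l) (ρ : Matrix (Fin n) (Fin n) ℝ) :
    (δ * ((2 : ℝ) • (S⁻¹ * ((ρ - δ⁻¹ * ρᵀ * δ) * S⁻¹) ^ (2 * l - 1))) +
        ((2 : ℝ) • (S⁻¹ * ((ρ - δ⁻¹ * ρᵀ * δ) * S⁻¹) ^ (2 * l - 1)))ᵀ * δ = 0) ∧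
    HasFDerivAt
      (fun σ : Matrix (Fin n) (Fin n) ℝ =>
        (1 / (2 * (l : ℝ))) * (((σ - δ⁻¹ * σᵀ * δ) * S⁻¹) ^ (2 * l)).trace)
      (((Matrix.traceLinearMap (Fin n) ℝ ℝ).comp
          (LinearMap.mulLeft ℝ
            ((2 : ℝ) • (S⁻¹ * ((ρ - δ⁻¹ * ρᵀ * δ) * S⁻¹) ^ (2 * l - 1))))).toContinuousLinearMap)
      ρ := by
  have hδt : δᵀ = δ := by
    ext i j
    rcases eq_or_ne i j with rfl | h
    · rfl
    · rw [transpose_apply, hδd h.symm, hδd h]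
  have hδi : (δ⁻¹)ᵀ = δ⁻¹ := by rw [transpose_nonsing_inv, hδt]
  have hδ1 : δ * δ⁻¹ = 1 := mul_nonsing_inv δ hδ
  have hδ2 : δ⁻¹ * δ = 1 := nonsing_inv_mul δ hδ
  have hS1 : S * S⁻¹ = 1 := mul_nonsing_inv S hSu
  have hSt : Sᵀ⁻¹ * Sᵀ = 1 := nonsing_inv_mul Sᵀ (by rwa [det_transpose])
  set T := S⁻¹ with hTdef
  set B := ρ - δ⁻¹ * ρᵀ * δ with hBdef
  set m := 2 * l - 1 with hmdef
  have hT : δ * T = Tᵀ * δ := by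
    calc δ * T = (Sᵀ⁻¹ * Sᵀ) * (δ * T) := by rw [hSt, one_mul]
      _ = Sᵀ⁻¹ * ((Sᵀ * δ) * T) := by simp only [Matrix.mul_assoc]
      _ = Sᵀ⁻¹ * (δ * (S * T)) := by rw [← hS]; simp only [Matrix.mul_assoc]
      _ = Sᵀ⁻¹ * δ := by rw [hTdef, hS1, mul_one]
      _ = Tᵀ * δ := by rw [hTdef, transpose_nonsing_inv]
  have hB : δ * B = -(Bᵀ * δ) := by
    have h1 : δ * (δ⁻¹ * ρᵀ * δ) = ρᵀ * δ := by
      rw [← Matrix.mul_assoc, ← Matrix.mul_assoc, hδ1, one_mul]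
    have h2 : Bᵀ = ρᵀ - δ * ρ * δ⁻¹ := by
      rw [hBdef, transpose_sub, transpose_mul, transpose_mul, hδt, hδi, transpose_transpose,
        Matrix.mul_assoc]
    rw [hBdef, Matrix.mul_sub, h1, ← hBdef, h2, Matrix.sub_mul, Matrix.mul_assoc, Matrix.mul_assoc,
      hδ2, mul_one, neg_sub]
  have hmodd : Odd m := ⟨l - 1, by omega⟩
  have hNodd : δ * (T * (B * T) ^ m) = -((T * (B * T) ^ m)ᵀ * δ) := by
    have := key_skew δ T B hT hB m
    rwa [hmodd.neg_one_pow, neg_one_smul] at this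
  constructor
  · rw [mul_smul_comm, transpose_smul, Matrix.smul_mul, hNodd]
    simp
  · -- derivative part
    have hφ : HasFDerivAt (fun σ : Matrix (Fin n) (Fin n) ℝ => (σ - δ⁻¹ * σᵀ * δ) * T)
        (phiL δ T).toContinuousLinearMap ρ := (phiL δ T).toContinuousLinearMap.hasFDerivAt
    have hpow := (matrix_hasFDerivAt_pow (2 * l) (B * T)).comp ρ hφ
    have htr := ((Matrix.traceLinearMap (Fin n) ℝ ℝ).toContinuousLinearMap.hasFDerivAt
      (x := ((ρ - δ⁻¹ * ρᵀ * δ) * T) ^ (2 * l))).comp ρ hpow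
    have hc := htr.const_mul (1 / (2 * (l : ℝ)))
    refine hc.congr_fderiv ?_
    refine ContinuousLinearMap.ext fun Δ => ?_
    change (1 / (2 * (l : ℝ))) * trace ((∑ i ∈ Finset.range (2 * l),
        (mulCLM ((B * T) ^ i)).comp (mulCLM.flip ((B * T) ^ (2 * l - 1 - i)))) (phiL δ T Δ))
      = trace (((2 : ℝ) • (T * (B * T) ^ m)) * Δ)
    simp only [ContinuousLinearMap.smul_apply, ContinuousLinearMap.comp_apply,
      ContinuousLinearMap.coe_sum', Finset.sum_apply, ContinuousLinearMap.flip_apply,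
      mulCLM_apply, LinearMap.coe_toContinuousLinearMap', phiL_apply,
      Matrix.traceLinearMap_apply, LinearMap.coe_comp, Function.comp_apply,
      LinearMap.mulLeft_apply, smul_eq_mul,
      ContinuousLinearMap.sum_apply]
    change 1 / (2 * (l : ℝ)) * (∑ i ∈ Finset.range (2 * l),
        ((B * T) ^ i * ((Δ - δ⁻¹ * Δᵀ * δ) * T * (B * T) ^ (2 * l - 1 - i)))).trace
      = ((2 : ℝ) • (T * (B * T) ^ m) * Δ).trace
    have hterm : ∀ x ∈ Finset.range (2 * l),
        ((B * T) ^ x * ((Δ - δ⁻¹ * Δᵀ * δ) * T * (B * T) ^ (2 * l - 1 - x))).trace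
          = ((B * T) ^ m * ((Δ - δ⁻¹ * Δᵀ * δ) * T)).trace := by
      intro x hx
      have hx' : 2 * l - 1 - x + x = m := by
        have := Finset.mem_range.mp hx; omega
      rw [← Matrix.mul_assoc, trace_mul_comm, ← Matrix.mul_assoc, ← pow_add, hx']
    rw [Matrix.trace_sum, Finset.sum_congr rfl hterm, Finset.sum_const, Finset.card_range,
      nsmul_eq_mul, key_trace δ T ((B * T) ^ m) Δ hδ1 hNodd]
    have h2l : ((2 * l : ℕ) : ℝ) = 2 * (l : ℝ) := by push_cast; ring
    have hl0 : (l : ℝ) ≠ 0 := by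
      exact_mod_cast Nat.cast_ne_zero.mpr (by omega)
    rw [h2l]
    field_simp
end

section
/- Let δ be an invertible diagonal n×n real matrix and S ∈ 𝒮 = {T : δT = Tᵀδ} invertible. Define the bracket on 𝒜 = {X : δX + Xᵀδ = 0} by [X,Y]_S = XSY - YSX. Then for every l ≥ 1 the function C_l(ρ) = (1/(2l))Tr(((ρ - δ⁻¹ρᵀδ)S⁻¹)^{2l}) on n×n matrices satisfies: for all ρ and all Y ∈ 𝒜, Tr(ρ·[X_l(ρ), Y]_S) = 0, where X_l(ρ) = 2S⁻¹((ρ - δ⁻¹ρᵀδ)S⁻¹)^{2l-1} is the gradient of C_l. (I.e., C_l is a Casimir function for the Lie–Poisson bracket.) -/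
open Matrix

private lemma conj_pow_aux {n : ℕ} (d e M : Matrix (Fin n) (Fin n) ℝ)
    (hde : d * e = 1) (hed : e * d = 1) (m : ℕ) :
    (d * M * e) ^ m = d * M ^ m * e := by
  induction m with
  | zero => simpa using hde.symm
  | succ k ih =>
      rw [pow_succ, pow_succ, ih]
      calc d * M ^ k * e * (d * M * e)
          = d * M ^ k * (e * d) * (M * e) := by simp only [Matrix.mul_assoc]
        _ = d * (M ^ k * M) * e := by rw [hed]; simp only [Matrix.mul_one, Matrix.mul_assoc]

theorem casimir_bracket_trace_zero {n : ℕ}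
    (δ S : Matrix (Fin n) (Fin n) ℝ)
    (hδd : δ.IsDiag) (hδ : IsUnit δ.det)
    (hS : δ * S = Sᵀ * δ) (hSu : IsUnit S.det)
    (l : ℕ) (hl : 1 ≤ l) (ρ : Matrix (Fin n) (Fin n) ℝ) :
    ∀ Y : Matrix (Fin n) (Fin n) ℝ, δ * Y + Yᵀ * δ = 0 →
      (ρ * (((2 : ℝ) • (S⁻¹ * ((ρ - δ⁻¹ * ρᵀ * δ) * S⁻¹) ^ (2 * l - 1))) * S * Y -
        Y * S * ((2 : ℝ) • (S⁻¹ * ((ρ - δ⁻¹ * ρᵀ * δ) * S⁻¹) ^ (2 * l - 1))))).trace = 0 := by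
  intro Y hY0
  have hδδ : δ * δ⁻¹ = 1 := mul_nonsing_inv δ hδ
  have hδδ' : δ⁻¹ * δ = 1 := nonsing_inv_mul δ hδ
  have hSS : S⁻¹ * S = 1 := nonsing_inv_mul S hSu
  have hSS' : S * S⁻¹ = 1 := mul_nonsing_inv S hSu
  have hδT : δᵀ = δ := by
    ext i j
    by_cases h : i = j
    · subst h; rfl
    · rw [Matrix.transpose_apply, hδd h, hδd (Ne.symm h)]
  have hδiT : (δ⁻¹)ᵀ = δ⁻¹ := by rw [Matrix.transpose_nonsing_inv, hδT]
  have hST : Sᵀ = δ * S * δ⁻¹ := by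
    rw [hS]
    calc Sᵀ = Sᵀ * (δ * δ⁻¹) := by rw [hδδ, Matrix.mul_one]
      _ = Sᵀ * δ * δ⁻¹ := by rw [Matrix.mul_assoc]
  have hSiT : (S⁻¹)ᵀ = δ * S⁻¹ * δ⁻¹ := by
    rw [Matrix.transpose_nonsing_inv]
    refine Matrix.inv_eq_left_inv ?_
    rw [hST]
    calc δ * S⁻¹ * δ⁻¹ * (δ * S * δ⁻¹)
        = δ * S⁻¹ * (δ⁻¹ * δ) * (S * δ⁻¹) := by simp only [Matrix.mul_assoc]
      _ = δ * (S⁻¹ * S) * δ⁻¹ := by rw [hδδ']; simp only [Matrix.mul_one, Matrix.mul_assoc]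
      _ = 1 := by rw [hSS, Matrix.mul_one, hδδ]
  set A : Matrix (Fin n) (Fin n) ℝ := ρ - δ⁻¹ * ρᵀ * δ with hAdef
  have hAT : Aᵀ = -(δ * A * δ⁻¹) := by
    have h1 : (δ⁻¹ * ρᵀ * δ)ᵀ = δ * ρ * δ⁻¹ := by
      rw [Matrix.transpose_mul, Matrix.transpose_mul, Matrix.transpose_transpose, hδT, hδiT,
        Matrix.mul_assoc]
    have h2 : δ * (δ⁻¹ * ρᵀ * δ) * δ⁻¹ = ρᵀ := by
      calc δ * (δ⁻¹ * ρᵀ * δ) * δ⁻¹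
          = (δ * δ⁻¹) * ρᵀ * (δ * δ⁻¹) := by simp only [Matrix.mul_assoc]
        _ = ρᵀ := by rw [hδδ, Matrix.one_mul, Matrix.mul_one]
    rw [hAdef, Matrix.transpose_sub, h1, Matrix.mul_sub, Matrix.sub_mul, h2, neg_sub]
  have hYT : Yᵀ = -(δ * Y * δ⁻¹) := by
    have h1 : Yᵀ * δ = -(δ * Y) := eq_neg_of_add_eq_zero_right hY0
    calc Yᵀ = Yᵀ * (δ * δ⁻¹) := by rw [hδδ, Matrix.mul_one]
      _ = (Yᵀ * δ) * δ⁻¹ := by rw [Matrix.mul_assoc]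
      _ = -(δ * Y) * δ⁻¹ := by rw [h1]
      _ = -(δ * Y * δ⁻¹) := by rw [Matrix.neg_mul]
  set m := 2 * l - 1 with hm
  have hodd : Odd m := ⟨l - 1, by omega⟩
  set P : Matrix (Fin n) (Fin n) ℝ := (S⁻¹ * A) ^ m with hP
  set Q : Matrix (Fin n) (Fin n) ℝ := (A * S⁻¹) ^ m with hQ
  have hAPQ : A * P = Q * A := by
    have h : SemiconjBy A (S⁻¹ * A) (A * S⁻¹) := by
      unfold SemiconjBy; rw [Matrix.mul_assoc]
    exact h.pow_right m
  have hQT : Qᵀ = -(δ * P * δ⁻¹) := by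
    have h1 : (A * S⁻¹)ᵀ = -(δ * (S⁻¹ * A) * δ⁻¹) := by
      rw [Matrix.transpose_mul, hSiT, hAT]
      calc δ * S⁻¹ * δ⁻¹ * -(δ * A * δ⁻¹)
          = -(δ * S⁻¹ * (δ⁻¹ * δ) * (A * δ⁻¹)) := by
            rw [Matrix.mul_neg]; simp only [Matrix.mul_assoc]
        _ = -(δ * (S⁻¹ * A) * δ⁻¹) := by rw [hδδ']; simp only [Matrix.mul_one, Matrix.mul_assoc]
    rw [hQ, Matrix.transpose_pow, h1, hodd.neg_pow, conj_pow_aux δ δ⁻¹ _ hδδ hδδ', ← hP]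
  have hPT : Pᵀ = -(δ * Q * δ⁻¹) := by
    have h1 : (S⁻¹ * A)ᵀ = -(δ * (A * S⁻¹) * δ⁻¹) := by
      rw [Matrix.transpose_mul, hSiT]
      calc Aᵀ * (δ * S⁻¹ * δ⁻¹) = -(δ * A * δ⁻¹) * (δ * S⁻¹ * δ⁻¹) := by rw [hAT]
        _ = -(δ * A * (δ⁻¹ * δ) * (S⁻¹ * δ⁻¹)) := by
            rw [Matrix.neg_mul]; simp only [Matrix.mul_assoc]
        _ = -(δ * (A * S⁻¹) * δ⁻¹) := by rw [hδδ']; simp only [Matrix.mul_one, Matrix.mul_assoc]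
    rw [hP, Matrix.transpose_pow, h1, hodd.neg_pow, conj_pow_aux δ δ⁻¹ _ hδδ hδδ', ← hQ]
  -- simplify bracket factors
  have hBS : S⁻¹ * (A * S⁻¹) ^ m * S = P := by
    have h : SemiconjBy S⁻¹ (A * S⁻¹) (S⁻¹ * A) := by
      unfold SemiconjBy; rw [Matrix.mul_assoc]
    have h2 : S⁻¹ * (A * S⁻¹) ^ m = P * S⁻¹ := h.pow_right m
    rw [h2, Matrix.mul_assoc, hSS, Matrix.mul_one]
  have hSB : S * (S⁻¹ * (A * S⁻¹) ^ m) = Q := by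
    rw [← Matrix.mul_assoc, hSS', Matrix.one_mul]
  -- the key trace identity
  have hU : (P * Y * A).trace = 0 := by
    have step : (P * Y * A).trace = -((P * Y * A).trace) := by
      calc (P * Y * A).trace = ((P * Y * A)ᵀ).trace := (Matrix.trace_transpose _).symm
        _ = (Aᵀ * (Yᵀ * Pᵀ)).trace := by
            rw [Matrix.transpose_mul, Matrix.transpose_mul]
        _ = (-(δ * (A * Y * Q) * δ⁻¹)).trace := by
            rw [hAT, hYT, hPT]
            congr 1
            calc -(δ * A * δ⁻¹) * (-(δ * Y * δ⁻¹) * -(δ * Q * δ⁻¹))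
                = -(δ * A * (δ⁻¹ * δ) * (Y * (δ⁻¹ * δ) * (Q * δ⁻¹))) := by
                  simp only [Matrix.neg_mul, Matrix.mul_neg, neg_neg, Matrix.mul_assoc]
              _ = -(δ * (A * Y * Q) * δ⁻¹) := by
                  rw [hδδ']; simp only [Matrix.mul_one, Matrix.mul_assoc]
        _ = -((δ * (A * Y * Q) * δ⁻¹).trace) := by rw [Matrix.trace_neg]
        _ = -((A * Y * Q).trace) := by
            rw [Matrix.trace_mul_cycle, ← Matrix.mul_assoc, hδδ', Matrix.one_mul]
        _ = -((Q * A * Y).trace) := by rw [Matrix.trace_mul_cycle]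
        _ = -((A * P * Y).trace) := by rw [← hAPQ]
        _ = -((P * Y * A).trace) := by rw [Matrix.trace_mul_cycle, Matrix.trace_mul_cycle]
    linarith
  have key : (ρ * (P * Y)).trace = (ρ * (Y * Q)).trace := by
    have hrq : (ρ * (Y * Q)).trace = (P * Y * (δ⁻¹ * ρᵀ * δ)).trace := by
      calc (ρ * (Y * Q)).trace = ((ρ * (Y * Q))ᵀ).trace := (Matrix.trace_transpose _).symm
        _ = (Qᵀ * Yᵀ * ρᵀ).trace := by
            rw [Matrix.transpose_mul, Matrix.transpose_mul]
        _ = (δ * (P * Y) * δ⁻¹ * ρᵀ).trace := by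
            rw [hQT, hYT]
            congr 2
            calc -(δ * P * δ⁻¹) * -(δ * Y * δ⁻¹)
                = δ * P * (δ⁻¹ * δ) * (Y * δ⁻¹) := by
                  simp only [Matrix.neg_mul, Matrix.mul_neg, neg_neg, Matrix.mul_assoc]
              _ = δ * (P * Y) * δ⁻¹ := by
                  rw [hδδ']; simp only [Matrix.mul_one, Matrix.mul_assoc]
        _ = (P * Y * (δ⁻¹ * ρᵀ * δ)).trace := by
            rw [show δ * (P * Y) * δ⁻¹ * ρᵀ = δ * (P * Y * (δ⁻¹ * ρᵀ)) from by
              simp only [Matrix.mul_assoc], Matrix.trace_mul_comm]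
            congr 1
            simp only [Matrix.mul_assoc]
    have hrp : (ρ * (P * Y)).trace = (P * Y * ρ).trace := Matrix.trace_mul_comm _ _
    have hdiff : (P * Y * ρ).trace - (P * Y * (δ⁻¹ * ρᵀ * δ)).trace = (P * Y * A).trace := by
      rw [← Matrix.trace_sub, ← Matrix.mul_sub, ← hAdef]
    rw [hrp, hrq]
    have := hU
    linarith [hdiff]
  -- assemble
  have e1 : ((2 : ℝ) • (S⁻¹ * (A * S⁻¹) ^ m)) * S * Y = (2 : ℝ) • (P * Y) := by
    rw [Matrix.smul_mul, Matrix.smul_mul, hBS]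
  have e2 : Y * S * ((2 : ℝ) • (S⁻¹ * (A * S⁻¹) ^ m)) = (2 : ℝ) • (Y * Q) := by
    rw [Matrix.mul_smul, Matrix.mul_assoc, hSB]
  rw [e1, e2, Matrix.mul_sub, Matrix.trace_sub, Matrix.mul_smul, Matrix.mul_smul,
    Matrix.trace_smul, Matrix.trace_smul, key]
  ring
end

section
/- Let δ = diag(1, a₁, a₁a₂, …, a₁⋯a_{n-1}) with all aᵢ ≠ 0, and let S ∈ 𝒮 = {T : δT = Tᵀδ} be invertible. Then there exist nonnegative integers p, q with p + q = n and an invertible matrix C such that CᵀSδ⁻¹C = diag(ε₁,…,ε_n) with each εᵢ ∈ {1, -1}, p of them equal to +1 and q equal to -1; consequently the Lie algebra (𝒜, [·,·]_S) with 𝒜 = {X : δX + Xᵀδ = 0} and [X,Y]_S = XSY - YSX is isomorphic to 𝔰𝔬(p,q). -/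
open Matrix

/-- The space of deformed skew-symmetric matrices `{X | δX + Xᵀδ = 0}` as a submodule. -/
def defSkew {n : ℕ} (δ : Matrix (Fin n) (Fin n) ℝ) :
    Submodule ℝ (Matrix (Fin n) (Fin n) ℝ) where
  carrier := {X | δ * X + Xᵀ * δ = 0}
  add_mem' := by
    intro X Y hX hY
    simp only [Set.mem_setOf_eq] at *
    rw [Matrix.mul_add, Matrix.transpose_add, Matrix.add_mul,
      show δ * X + δ * Y + (Xᵀ * δ + Yᵀ * δ) =
        (δ * X + Xᵀ * δ) + (δ * Y + Yᵀ * δ) by abel, hX, hY, add_zero]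
  zero_mem' := by simp
  smul_mem' := by
    intro c X hX
    simp only [Set.mem_setOf_eq] at *
    rw [Matrix.mul_smul, Matrix.transpose_smul, Matrix.smul_mul, ← smul_add, hX, smul_zero]

-- down-closed finset of Fin n equals initial segment
private lemma downclosed_eq {n : ℕ} (F : Finset (Fin n))
    (hdc : ∀ i j : Fin n, i ≤ j → j ∈ F → i ∈ F) (i : Fin n) :
    i ∈ F ↔ (i : ℕ) < F.card := by
  constructor
  · intro hi
    by_contra h
    push_neg at h
    have hsub : Finset.Iic i ⊆ F := fun j hj => hdc j i (Finset.mem_Iic.mp hj) hi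
    have := Finset.card_le_card hsub
    rw [Fin.card_Iic] at this
    omega
  · intro hi
    by_contra h
    have hsub : F ⊆ Finset.Iio i := by
      intro j hj
      rw [Finset.mem_Iio]
      rcases lt_or_ge j i with h' | h'
      · exact h'
      · exact absurd (hdc i j h' hj) h
    have := Finset.card_le_card hsub
    rw [Fin.card_Iio] at this
    omega

private lemma sylvester_sorted {n : ℕ} (M : Matrix (Fin n) (Fin n) ℝ) (hM : Mᵀ = M)
    (hMd : IsUnit M.det) :
    ∃ p ≤ n, ∃ C : Matrix (Fin n) (Fin n) ℝ, IsUnit C.det ∧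
      Cᵀ * M * C = Matrix.diagonal (fun i : Fin n => if (i : ℕ) < p then (1 : ℝ) else -1) := by
  have hH : M.IsHermitian := by
    rwa [Matrix.IsHermitian, Matrix.conjTranspose_eq_transpose_of_trivial]
  set ev : Fin n → ℝ := hH.eigenvalues with hev
  have hdet : M.det = ∏ i, ev i := by
    simpa using hH.det_eq_prod_eigenvalues
  have hev0 : ∀ i, ev i ≠ 0 := by
    intro i hi
    rw [hdet] at hMd
    rcases Finset.prod_eq_zero (Finset.mem_univ i) hi ▸ hMd with h
    simp at h
  set U : Matrix (Fin n) (Fin n) ℝ := (hH.eigenvectorUnitary : Matrix (Fin n) (Fin n) ℝ) with hU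
  have hUM : star U * M * U = Matrix.diagonal ev := by
    simpa [Unitary.conjStarAlgAut_star_apply] using hH.conjStarAlgAut_star_eigenvectorUnitary
  have hUstar : star U = Uᵀ := by
    rw [Matrix.star_eq_conjTranspose, Matrix.conjTranspose_eq_transpose_of_trivial]
  set s : Fin n → ℝ := fun i => if 0 < ev i then 1 else -1 with hs
  set d : Fin n → ℝ := fun i => (Real.sqrt |ev i|)⁻¹ with hd
  have hdev : ∀ i, d i * ev i * d i = s i := by
    intro i
    have h1 : (0:ℝ) < |ev i| := abs_pos.mpr (hev0 i)
    have h2 : Real.sqrt |ev i| * Real.sqrt |ev i| = |ev i| := Real.mul_self_sqrt h1.le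
    have h3 : Real.sqrt |ev i| ≠ 0 := (Real.sqrt_pos.mpr h1).ne'
    simp only [hd, hs]
    rcases lt_or_ge 0 (ev i) with h | h
    · rw [if_pos h, abs_of_pos h] at *
      field_simp
      rw [sq, h2]
    · have h' : ev i < 0 := lt_of_le_of_ne h (hev0 i)
      rw [if_neg (not_lt.mpr h), abs_of_neg h'] at *
      field_simp
      rw [sq, h2, neg_neg]
  -- sort
  set σ : Equiv.Perm (Fin n) := Tuple.sort (fun i => -s i) with hσ
  have hmono : Monotone ((fun i => -s i) ∘ σ) := Tuple.monotone_sort _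
  set p : ℕ := (Finset.univ.filter (fun i => s i = 1)).card with hp
  have hple : p ≤ n := by
    simpa [hp] using Finset.card_filter_le Finset.univ (fun i => s i = 1)
  have hs1 : ∀ i, s i = 1 ∨ s i = -1 := by
    intro i; simp only [hs]; split <;> simp
  have hFcard : (Finset.univ.filter (fun i => s (σ i) = 1)).card = p := by
    rw [hp]
    apply Finset.card_bij (fun i _ => σ i)
    · intro i hi; simpa using (Finset.mem_filter.mp hi).2
    · intro i _ j _ hij; exact σ.injective hij
    · intro j hj
      exact ⟨σ.symm j, by simpa using (Finset.mem_filter.mp hj).2, by simp⟩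
  have hsσ : ∀ i : Fin n, s (σ i) = if (i : ℕ) < p then 1 else -1 := by
    have hdc : ∀ i j : Fin n, i ≤ j → j ∈ Finset.univ.filter (fun i => s (σ i) = 1) →
        i ∈ Finset.univ.filter (fun i => s (σ i) = 1) := by
      intro i j hij hj
      simp only [Finset.mem_filter, Finset.mem_univ, true_and] at *
      have := hmono hij
      simp only [Function.comp_apply, hj] at this
      rcases hs1 (σ i) with h | h
      · exact h
      · rw [h] at this; linarith
    intro i
    have := downclosed_eq _ hdc i
    rw [hFcard] at this
    simp only [Finset.mem_filter, Finset.mem_univ, true_and] at this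
    split
    · exact this.mpr (by assumption)
    · rcases hs1 (σ i) with h | h
      · exact absurd (this.mp h) (by assumption)
      · exact h
  -- the matrix
  set B : Matrix (Fin n) (Fin n) ℝ := U * Matrix.diagonal d with hB
  have hBMB : Bᵀ * M * B = Matrix.diagonal s := by
    rw [hB, Matrix.transpose_mul, Matrix.diagonal_transpose, ← hUstar]
    calc Matrix.diagonal d * star U * M * (U * Matrix.diagonal d)
        = Matrix.diagonal d * (star U * M * U) * Matrix.diagonal d := by
          simp only [Matrix.mul_assoc]
      _ = Matrix.diagonal d * Matrix.diagonal ev * Matrix.diagonal d := by rw [hUM]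
      _ = Matrix.diagonal s := by
          rw [Matrix.diagonal_mul_diagonal, Matrix.diagonal_mul_diagonal,
            show (fun i => d i * ev i * d i) = s from funext hdev]
  have hcong : (B.submatrix id ⇑σ)ᵀ * M * B.submatrix id ⇑σ =
      Matrix.diagonal (fun i : Fin n => if (i : ℕ) < p then (1 : ℝ) else -1) := by
    have h1 : (B.submatrix id ⇑σ)ᵀ = Bᵀ.submatrix ⇑σ id := by
      rw [Matrix.transpose_submatrix]
    rw [h1]
    have h2 : Bᵀ.submatrix ⇑σ id * M = (Bᵀ * M).submatrix ⇑σ id := by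
      rw [show M = M.submatrix id id from rfl]
      exact (Matrix.submatrix_mul _ _ _ id _ Function.bijective_id).symm
    rw [h2]
    have h3 : (Bᵀ * M).submatrix ⇑σ id * B.submatrix id ⇑σ = (Bᵀ * M * B).submatrix ⇑σ ⇑σ :=
      (Matrix.submatrix_mul _ _ _ id _ Function.bijective_id).symm
    rw [h3, hBMB, Matrix.submatrix_diagonal_equiv,
      show s ∘ ⇑σ = (fun i : Fin n => if (i : ℕ) < p then (1:ℝ) else -1) from
        funext fun i => hsσ i]
  refine ⟨p, hple, B.submatrix id σ, ?_, hcong⟩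
  have hdd : (Matrix.diagonal (fun i : Fin n => if (i : ℕ) < p then (1 : ℝ) else -1)).det ≠ 0 := by
    rw [Matrix.det_diagonal]
    apply Finset.prod_ne_zero_iff.mpr
    intro i _
    split <;> norm_num
  rw [← hcong] at hdd
  simp only [Matrix.det_mul] at hdd
  rw [isUnit_iff_ne_zero]
  intro h
  rw [h] at hdd
  simp at hdd

lemma mem_defSkew {n : ℕ} {δ X : Matrix (Fin n) (Fin n) ℝ} :
    X ∈ defSkew δ ↔ δ * X + Xᵀ * δ = 0 := Iff.rfl

section Main

variable {n : ℕ} (δ S C : Matrix (Fin n) (Fin n) ℝ)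

private theorem main_part (a : ℕ → ℝ) (ha : ∀ i, a i ≠ 0)
    (hδ : δ = Matrix.diagonal (fun i : Fin n => ∏ m ∈ Finset.Icc 1 (i : ℕ), a m))
    (hS : δ * S = Sᵀ * δ) (hSu : IsUnit S.det) (p : ℕ) (hCu : IsUnit C.det)
    (hC : Cᵀ * (S * δ⁻¹) * C =
      Matrix.diagonal (fun i : Fin n => if (i : ℕ) < p then (1 : ℝ) else -1)) :
    ∃ e : defSkew δ ≃ₗ[ℝ]
        defSkew (Matrix.diagonal (fun i : Fin n => if (i : ℕ) < p then (1 : ℝ) else -1)),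
      ∀ X Y Z : defSkew δ,
        (Z : Matrix (Fin n) (Fin n) ℝ) = (X : Matrix (Fin n) (Fin n) ℝ) * S * Y - (Y : Matrix (Fin n) (Fin n) ℝ) * S * X →
        (e Z : Matrix (Fin n) (Fin n) ℝ) =
          (e X : Matrix (Fin n) (Fin n) ℝ) * (e Y : Matrix (Fin n) (Fin n) ℝ) -
            (e Y : Matrix (Fin n) (Fin n) ℝ) * (e X : Matrix (Fin n) (Fin n) ℝ) := by
  have hδu : IsUnit δ.det := by
    rw [hδ, Matrix.det_diagonal, isUnit_iff_ne_zero]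
    exact Finset.prod_ne_zero_iff.mpr fun i _ => Finset.prod_ne_zero_iff.mpr fun m _ => ha m
  have hδt : δᵀ = δ := by rw [hδ, Matrix.diagonal_transpose]
  have hδii : δ⁻¹⁻¹ = δ := Matrix.nonsing_inv_nonsing_inv δ hδu
  have hCtu : IsUnit Cᵀ.det := by rwa [Matrix.det_transpose]
  have hδi : δ * δ⁻¹ = 1 := Matrix.mul_nonsing_inv δ hδu
  have hiδ : δ⁻¹ * δ = 1 := Matrix.nonsing_inv_mul δ hδu
  have hSi : S * S⁻¹ = 1 := Matrix.mul_nonsing_inv S hSu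
  have hiS : S⁻¹ * S = 1 := Matrix.nonsing_inv_mul S hSu
  have hCi : C * C⁻¹ = 1 := Matrix.mul_nonsing_inv C hCu
  have hiC : C⁻¹ * C = 1 := Matrix.nonsing_inv_mul C hCu
  have hCti : Cᵀ * (Cᵀ)⁻¹ = 1 := Matrix.mul_nonsing_inv _ hCtu
  have hiCt : (Cᵀ)⁻¹ * Cᵀ = 1 := Matrix.nonsing_inv_mul _ hCtu
  have c1 : ∀ B : Matrix (Fin n) (Fin n) ℝ, δ * (δ⁻¹ * B) = B :=
    fun B => Matrix.mul_nonsing_inv_cancel_left δ B hδu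
  have c2 : ∀ B : Matrix (Fin n) (Fin n) ℝ, δ⁻¹ * (δ * B) = B :=
    fun B => Matrix.nonsing_inv_mul_cancel_left δ B hδu
  have c3 : ∀ B : Matrix (Fin n) (Fin n) ℝ, S * (S⁻¹ * B) = B :=
    fun B => Matrix.mul_nonsing_inv_cancel_left S B hSu
  have c4 : ∀ B : Matrix (Fin n) (Fin n) ℝ, S⁻¹ * (S * B) = B :=
    fun B => Matrix.nonsing_inv_mul_cancel_left S B hSu
  have c5 : ∀ B : Matrix (Fin n) (Fin n) ℝ, C * (C⁻¹ * B) = B :=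
    fun B => Matrix.mul_nonsing_inv_cancel_left C B hCu
  have c6 : ∀ B : Matrix (Fin n) (Fin n) ℝ, C⁻¹ * (C * B) = B :=
    fun B => Matrix.nonsing_inv_mul_cancel_left C B hCu
  have c7 : ∀ B : Matrix (Fin n) (Fin n) ℝ, Cᵀ * ((Cᵀ)⁻¹ * B) = B :=
    fun B => Matrix.mul_nonsing_inv_cancel_left _ B hCtu
  have c8 : ∀ B : Matrix (Fin n) (Fin n) ℝ, (Cᵀ)⁻¹ * (Cᵀ * B) = B :=
    fun B => Matrix.nonsing_inv_mul_cancel_left _ B hCtu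
  have hSt : Sᵀ = δ * (S * δ⁻¹) := by
    calc Sᵀ = Sᵀ * (δ * δ⁻¹) := by rw [hδi, mul_one]
    _ = (Sᵀ * δ) * δ⁻¹ := by rw [Matrix.mul_assoc]
    _ = (δ * S) * δ⁻¹ := by rw [hS]
    _ = δ * (S * δ⁻¹) := by rw [Matrix.mul_assoc]
  have hSti : (Sᵀ)⁻¹ = δ * (S⁻¹ * δ⁻¹) := by
    rw [hSt]
    simp [Matrix.mul_inv_rev, hδii, Matrix.mul_assoc]
  set J := Matrix.diagonal (fun i : Fin n => if (i : ℕ) < p then (1 : ℝ) else -1) with hJ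
  -- forward membership
  have hfwd : ∀ X : Matrix (Fin n) (Fin n) ℝ, X ∈ defSkew δ →
      (C⁻¹ * δ) * X * (S * δ⁻¹ * C) ∈ defSkew J := by
    intro X hX
    rw [mem_defSkew] at hX ⊢
    have hXt : Xᵀ = -(δ * (X * δ⁻¹)) := by
      have h1 : Xᵀ * δ = -(δ * X) := by
        rw [eq_neg_iff_add_eq_zero, add_comm]; exact hX
      calc Xᵀ = Xᵀ * (δ * δ⁻¹) := by rw [hδi, mul_one]
      _ = (Xᵀ * δ) * δ⁻¹ := by rw [Matrix.mul_assoc]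
      _ = -(δ * X) * δ⁻¹ := by rw [h1]
      _ = -(δ * (X * δ⁻¹)) := by rw [Matrix.neg_mul, Matrix.mul_assoc]
    rw [← hC]
    simp only [Matrix.transpose_mul, Matrix.transpose_nonsing_inv, hδt, hXt, hSt,
      Matrix.neg_mul, Matrix.mul_neg, Matrix.mul_assoc, c1, c2, c3, c4, c5, c6, c7, c8]
    simp
  -- backward membership
  have hbwd : ∀ W : Matrix (Fin n) (Fin n) ℝ, W ∈ defSkew J →
      (δ⁻¹ * C) * W * (C⁻¹ * (δ * S⁻¹)) ∈ defSkew δ := by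
    intro W hW
    rw [mem_defSkew] at hW ⊢
    have hJinv : J * (C⁻¹ * (δ * (S⁻¹ * (Cᵀ)⁻¹))) = 1 := by
      rw [← hC]
      simp only [Matrix.mul_assoc, c1, c2, c3, c4, c5, c6, c7, c8]
      exact hCti
    have hWt : Wᵀ = -(J * (W * (C⁻¹ * (δ * (S⁻¹ * (Cᵀ)⁻¹))))) := by
      have h1 : Wᵀ * J = -(J * W) := by
        rw [eq_neg_iff_add_eq_zero, add_comm]; exact hW
      calc Wᵀ = Wᵀ * (J * (C⁻¹ * (δ * (S⁻¹ * (Cᵀ)⁻¹)))) := by rw [hJinv, mul_one]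
      _ = (Wᵀ * J) * (C⁻¹ * (δ * (S⁻¹ * (Cᵀ)⁻¹))) := by rw [Matrix.mul_assoc]
      _ = -(J * W) * (C⁻¹ * (δ * (S⁻¹ * (Cᵀ)⁻¹))) := by rw [h1]
      _ = -(J * (W * (C⁻¹ * (δ * (S⁻¹ * (Cᵀ)⁻¹))))) := by
          rw [Matrix.neg_mul, Matrix.mul_assoc]
    rw [show (((δ⁻¹ * C) * W * (C⁻¹ * (δ * S⁻¹)))ᵀ : Matrix (Fin n) (Fin n) ℝ) =
      (S⁻¹)ᵀ * δᵀ * (C⁻¹)ᵀ * Wᵀ * (Cᵀ * (δ⁻¹)ᵀ) by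
        simp [Matrix.transpose_mul, Matrix.mul_assoc]]
    rw [hWt, ← hC]
    simp only [Matrix.transpose_nonsing_inv, hδt, hSti,
      Matrix.neg_mul, Matrix.mul_neg, Matrix.mul_assoc, c1, c2, c3, c4, c5, c6, c7, c8,
      hiδ, hδi, hSi, hiS, hCi, hiC, hCti, hiCt, Matrix.mul_one]
    simp
  refine ⟨{ toFun := fun X => ⟨(C⁻¹ * δ) * (X : Matrix (Fin n) (Fin n) ℝ) * (S * δ⁻¹ * C),
              hfwd X X.2⟩
            map_add' := by
              intro X Y; apply Subtype.ext
              simp [Matrix.mul_add, Matrix.add_mul]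
            map_smul' := by
              intro c X; apply Subtype.ext
              simp [Matrix.mul_smul, Matrix.smul_mul]
            invFun := fun W => ⟨(δ⁻¹ * C) * (W : Matrix (Fin n) (Fin n) ℝ) * (C⁻¹ * (δ * S⁻¹)),
              hbwd W W.2⟩
            left_inv := by
              intro X; apply Subtype.ext
              simp only [Matrix.mul_assoc, c1, c2, c3, c4, c5, c6, c7, c8,
                hiδ, hδi, hSi, hiS, hCi, hiC, Matrix.mul_one]
            right_inv := by
              intro W; apply Subtype.ext
              simp only [Matrix.mul_assoc, c1, c2, c3, c4, c5, c6, c7, c8,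
                hiδ, hδi, hSi, hiS, hCi, hiC, Matrix.mul_one] }, ?_⟩
  intro X Y Z hZ
  show (C⁻¹ * δ) * (Z : Matrix (Fin n) (Fin n) ℝ) * (S * δ⁻¹ * C) =
    (C⁻¹ * δ) * (X : Matrix (Fin n) (Fin n) ℝ) * (S * δ⁻¹ * C) *
      ((C⁻¹ * δ) * (Y : Matrix (Fin n) (Fin n) ℝ) * (S * δ⁻¹ * C)) -
    (C⁻¹ * δ) * (Y : Matrix (Fin n) (Fin n) ℝ) * (S * δ⁻¹ * C) *
      ((C⁻¹ * δ) * (X : Matrix (Fin n) (Fin n) ℝ) * (S * δ⁻¹ * C))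
  rw [hZ]
  simp only [Matrix.sub_mul, Matrix.mul_sub, Matrix.mul_assoc, c1, c2, c3, c4, c5, c6, c7, c8,
    hiδ, hδi, hSi, hiS, hCi, hiC, Matrix.mul_one]

end Main

/-- For `δ = diag(1, a₁, a₁a₂, …, a₁⋯a_{n-1})` with all `aᵢ ≠ 0` and `S` invertible deformed
symmetric, `Sδ⁻¹` can be conjugated by some invertible `C` into a `±1` diagonal matrix with
`p` entries `+1` and `q = n - p` entries `-1`, and `(𝒜, [·,·]_S)` is Lie-isomorphic to
`𝔰𝔬(p,q)` (skew matrices for the signature `(p,q)` form, with the ordinary commutator). -/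
theorem iso_so_pq {n : ℕ} (a : ℕ → ℝ) (ha : ∀ i, a i ≠ 0)
    (δ S : Matrix (Fin n) (Fin n) ℝ)
    (hδ : δ = Matrix.diagonal (fun i : Fin n => ∏ m ∈ Finset.Icc 1 (i : ℕ), a m))
    (hS : δ * S = Sᵀ * δ) (hSu : IsUnit S.det) :
    ∃ (p q : ℕ) (C : Matrix (Fin n) (Fin n) ℝ), p + q = n ∧ IsUnit C.det ∧
      Cᵀ * (S * δ⁻¹) * C =
        Matrix.diagonal (fun i : Fin n => if (i : ℕ) < p then (1 : ℝ) else -1) ∧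
      ∃ e : defSkew δ ≃ₗ[ℝ]
          defSkew (Matrix.diagonal (fun i : Fin n => if (i : ℕ) < p then (1 : ℝ) else -1)),
        ∀ X Y Z : defSkew δ,
          (Z : Matrix (Fin n) (Fin n) ℝ) = (X : Matrix (Fin n) (Fin n) ℝ) * S * Y - (Y : Matrix (Fin n) (Fin n) ℝ) * S * X →
          (e Z : Matrix (Fin n) (Fin n) ℝ) =
            (e X : Matrix (Fin n) (Fin n) ℝ) * (e Y : Matrix (Fin n) (Fin n) ℝ) -
              (e Y : Matrix (Fin n) (Fin n) ℝ) * (e X : Matrix (Fin n) (Fin n) ℝ) := by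
  have hδu : IsUnit δ.det := by
    rw [hδ, Matrix.det_diagonal, isUnit_iff_ne_zero]
    exact Finset.prod_ne_zero_iff.mpr fun i _ => Finset.prod_ne_zero_iff.mpr fun m _ => ha m
  have hδt : δᵀ = δ := by rw [hδ, Matrix.diagonal_transpose]
  have hMsymm : (S * δ⁻¹)ᵀ = S * δ⁻¹ := by
    have hδi : δ * δ⁻¹ = 1 := Matrix.mul_nonsing_inv δ hδu
    have hiδ : δ⁻¹ * δ = 1 := Matrix.nonsing_inv_mul δ hδu
    rw [Matrix.transpose_mul, Matrix.transpose_nonsing_inv, hδt]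
    calc δ⁻¹ * Sᵀ = δ⁻¹ * ((Sᵀ * δ) * δ⁻¹) := by
          rw [Matrix.mul_assoc, hδi, Matrix.mul_one]
    _ = δ⁻¹ * ((δ * S) * δ⁻¹) := by rw [hS]
    _ = (δ⁻¹ * δ) * (S * δ⁻¹) := by simp only [Matrix.mul_assoc]
    _ = S * δ⁻¹ := by rw [hiδ, Matrix.one_mul]
  have hMu : IsUnit (S * δ⁻¹).det := by
    rw [Matrix.det_mul, Matrix.det_nonsing_inv]
    exact hSu.mul (isUnit_ringInverse.mpr hδu)
  obtain ⟨p, hple, C, hCu, hC⟩ := sylvester_sorted (S * δ⁻¹) hMsymm hMu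
  exact ⟨p, n - p, C, by omega, hCu, hC, main_part δ S C a ha hδ hS hSu p hCu hC⟩
end
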